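/- The Gibbs fixed point is a mixed Nash equilibrium: Let f be continuous on 𝕋^n × 𝕋^n and let μ* = ρ* dx, ν* = η* dx be probability measures on 𝕋^n satisfying ρ*(x) = e^{−V_{ν*}(x)} / ∫ e^{−V_{ν*}} dx and η*(y) = e^{U_{μ*}(y)} / ∫ e^{U_{μ*}} dy, where U_μ(y) = ∫ f(x,y) dμ(x) and V_ν(x) = ∫ f(x,y) dν(y). Then for all μ, ν ∈ 𝒫(𝕋^n), F(μ*, ν) ≤ F(μ*, ν*) ≤ F(μ, ν*); in particular NI(μ*, ν*) = 0. -/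

import Mathlib

open MeasureTheory


/-- The flat torus `ℝⁿ/ℤⁿ`, modeled as a product of circles of length `1`, equipped with
its (probability) Haar/Lebesgue measure `volume`. -/
abbrev Torus (n : ℕ) := Fin n → AddCircle (1 : ℝ)

/-- The density of a measure on the torus with respect to the Lebesgue (probability) measure. -/
noncomputable def density {n : ℕ} (ν : Measure (Torus n)) : Torus n → ℝ :=
  fun x => (ν.rnDeriv volume x).toReal

/-- A measure has finite entropy `H(ν) = ∫ ρ log ρ dx < ∞` iff it is absolutely continuous with
respect to Lebesgue measure and `ρ log ρ` is integrable. -/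
def entAdmissible {n : ℕ} (ν : Measure (Torus n)) : Prop :=
  ν ≪ (volume : Measure (Torus n)) ∧
    Integrable (fun x => density ν x * Real.log (density ν x)) (volume : Measure (Torus n))

/-- The (negative) entropy `H(ν) = ∫ ρ log ρ dx` of an absolutely continuous measure. -/
noncomputable def Hent {n : ℕ} (ν : Measure (Torus n)) : ℝ :=
  ∫ x, density ν x * Real.log (density ν x)

open Classical in
/-- The payoff functional `F(μ,ν) = ∬ f dμ dν + H(μ) − H(ν)`, as an extended real number:
it equals `−∞ = ⊥` when `H(ν) = +∞` (and `H(μ) < ∞`), and `+∞ = ⊤` when `H(μ) = +∞`. -/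
noncomputable def Fval {n : ℕ} (f : Torus n → Torus n → ℝ) (μ ν : Measure (Torus n)) : EReal :=
  if entAdmissible μ then
    (if entAdmissible ν then (((∫ x, ∫ y, f x y ∂ν ∂μ) + Hent μ - Hent ν : ℝ) : EReal) else ⊥)
  else ⊤

/-- The Nikaido–Isoda error `NI(μ,ν) = sup_{ν'} F(μ,ν') − inf_{μ'} F(μ',ν)`, the suprema and
infima being taken over all Borel probability measures on the torus. -/
noncomputable def NIval {n : ℕ} (f : Torus n → Torus n → ℝ) (μ ν : Measure (Torus n)) : EReal :=
  (⨆ ν' ∈ {m : Measure (Torus n) | IsProbabilityMeasure m}, Fval f μ ν')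
    - (⨅ μ' ∈ {m : Measure (Torus n) | IsProbabilityMeasure m}, Fval f μ' ν)

/-!
For a continuous potential `W` on the torus, the Gibbs variational principle says that
`∫ W dν − H(ν) ≤ log ∫ e^W` for every probability measure `ν`, with equality for
`ν = e^W / ∫ e^W dx`; pointwise this is `t − h ≤ t (log t − log h)` integrated against
`h = e^W / ∫ e^W`. By Fubini, `ν ↦ F(μ*, ν)` is `∫ U_{μ*} dν − H(ν)` plus a constant and
`μ ↦ F(μ, ν*)` is `−(∫ (−V_{ν*}) dμ − H(μ))` plus a constant, so the fixed-point relations make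
`ν*` a maximiser of the first and `μ*` a minimiser of the second: `(μ*, ν*)` is a saddle point
of `F`, and the Nikaido–Isoda error of a saddle point with finite value vanishes.
-/

open Real

theorem Real.sub_le_mul_log_sub_log {t h : ℝ} (ht : 0 ≤ t) (hh : 0 < h) :
    t - h ≤ t * (log t - log h) := by
  rcases ht.eq_or_lt with rfl | ht
  · simpa using hh.le
  · have := one_sub_inv_le_log_of_pos (div_pos ht hh)
    rw [inv_div, log_div ht.ne' hh.ne'] at this
    have key : t * (1 - h / t) = t - h := by field_simp
    nlinarith

section Gibbs

variable {X : Type*} [MeasurableSpace X] {m : Measure X} [NeZero m] {W : X → ℝ}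

theorem integral_mul_sub_integral_mul_log_le_log_integral_exp {g : X → ℝ} (hg : 0 ≤ g)
    (hg_one : ∫ x, g x ∂m = 1) (hWg : Integrable (fun x => W x * g x) m)
    (hglog : Integrable (fun x => g x * log (g x)) m) (hexp : Integrable (fun x => exp (W x)) m) :
    ∫ x, W x * g x ∂m - ∫ x, g x * log (g x) ∂m ≤ log (∫ x, exp (W x) ∂m) := by
  set Z := ∫ x, exp (W x) ∂m
  have hZ : 0 < Z := integral_exp_pos hexp
  have hg_int : Integrable g m := .of_integral_ne_zero (by simp [hg_one])
  have hη_int : Integrable (fun x => exp (W x) / Z) m := hexp.div_const Z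
  have hpointwise : ∀ x, g x - exp (W x) / Z ≤ g x * log (g x) - W x * g x + log Z * g x := by
    intro x
    have := sub_le_mul_log_sub_log (hg x) (div_pos (exp_pos (W x)) hZ)
    rw [log_div (exp_ne_zero _) hZ.ne', log_exp] at this
    linarith
  have hmono : ∫ x, (g x - exp (W x) / Z) ∂m
      ≤ ∫ x, (g x * log (g x) - W x * g x + log Z * g x) ∂m :=
    integral_mono (hg_int.sub hη_int) ((hglog.sub hWg).add (hg_int.const_mul _)) hpointwise
  have hglog_sub : Integrable (fun x => g x * log (g x) - W x * g x) m := hglog.sub hWg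
  rw [integral_sub hg_int hη_int, integral_add hglog_sub (hg_int.const_mul _),
    integral_sub hglog hWg, integral_const_mul, integral_div, hg_one, div_self hZ.ne'] at hmono
  linarith

theorem integral_mul_sub_integral_mul_log_gibbs {η : X → ℝ}
    (hη : ∀ x, η x = exp (W x) / ∫ z, exp (W z) ∂m) (hexp : Integrable (fun x => exp (W x)) m)
    (hWη : Integrable (fun x => W x * η x) m) :
    ∫ x, W x * η x ∂m - ∫ x, η x * log (η x) ∂m = log (∫ x, exp (W x) ∂m) := by
  set Z := ∫ x, exp (W x) ∂m
  have hZ : 0 < Z := integral_exp_pos hexp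
  have hη_int : Integrable η m := by
    rw [show η = _ from funext hη]
    exact hexp.div_const Z
  have hη_one : ∫ x, η x ∂m = 1 := by
    simp_rw [hη]
    rw [integral_div]
    exact div_self hZ.ne'
  have hη_log : (fun x => η x * log (η x)) = fun x => W x * η x - log Z * η x := by
    funext x
    rw [hη x, log_div (exp_ne_zero _) hZ.ne', log_exp]
    ring
  rw [hη_log, integral_sub hWη (hη_int.const_mul _), integral_const_mul, hη_one]
  ring

end Gibbs

section Torus

variable {n : ℕ}

theorem integral_eq_integral_mul_density {ν : Measure (Torus n)} [SigmaFinite ν]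
    (hν : ν ≪ volume) (W : Torus n → ℝ) : ∫ x, W x ∂ν = ∫ x, W x * density ν x := by
  rw [← integral_rnDeriv_smul hν]
  simp only [density, smul_eq_mul, mul_comm]

theorem integral_density {ν : Measure (Torus n)} [IsProbabilityMeasure ν] (hν : ν ≪ volume) :
    ∫ x, density ν x = 1 := by
  simpa [density] using Measure.integral_toReal_rnDeriv hν

theorem density_withDensity_ofReal {η : Torus n → ℝ} (hη : Measurable η) (hη0 : 0 ≤ η) :
    density (volume.withDensity fun x => ENNReal.ofReal (η x)) =ᵐ[volume] η := by
  filter_upwards [Measure.rnDeriv_withDensity volume hη.ennreal_ofReal] with x hx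
  rw [density, hx, ENNReal.toReal_ofReal (hη0 x)]

theorem entAdmissible_withDensity_ofReal {η : Torus n → ℝ} (hη : Continuous η) (hη0 : 0 ≤ η) :
    entAdmissible (volume.withDensity fun x => ENNReal.ofReal (η x)) := by
  refine ⟨withDensity_absolutelyContinuous _ _, ?_⟩
  refine ((continuous_mul_log.comp hη).integrable_of_hasCompactSupport
    (.of_compactSpace _)).congr ?_
  filter_upwards [density_withDensity_ofReal hη.measurable hη0] with x hx
  simp [hx]

theorem integral_sub_hent_withDensity_ofReal {η W : Torus n → ℝ} (hη : Continuous η)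
    (hη0 : 0 ≤ η) :
    ∫ x, W x ∂(volume.withDensity fun x => ENNReal.ofReal (η x))
        - Hent (volume.withDensity fun x => ENNReal.ofReal (η x))
      = (∫ x, W x * η x) - ∫ x, η x * log (η x) := by
  have hdens := density_withDensity_ofReal hη.measurable hη0
  rw [integral_eq_integral_mul_density (withDensity_absolutelyContinuous volume _) W, Hent]
  congr 1 <;> refine integral_congr_ae ?_ <;> filter_upwards [hdens] with x hx <;> rw [hx]

theorem integral_sub_hent_le_log_integral_exp {W : Torus n → ℝ} (hW : Continuous W)
    {ν : Measure (Torus n)} [IsProbabilityMeasure ν] (hν : entAdmissible ν) :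
    ∫ x, W x ∂ν - Hent ν ≤ log (∫ x, exp (W x)) := by
  obtain ⟨hac, hlog⟩ := hν
  obtain ⟨C, hC⟩ := isCompact_univ.exists_bound_of_continuousOn hW.continuousOn
  rw [integral_eq_integral_mul_density hac]
  refine integral_mul_sub_integral_mul_log_le_log_integral_exp
    (fun _ => ENNReal.toReal_nonneg) (integral_density hac) ?_ hlog
    ((continuous_exp.comp hW).integrable_of_hasCompactSupport (.of_compactSpace _))
  exact Measure.integrable_toReal_rnDeriv.bdd_mul hW.aestronglyMeasurable
    (.of_forall fun x => hC x (Set.mem_univ x))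

theorem continuous_gibbs {W η : Torus n → ℝ} (hW : Continuous W)
    (hη : ∀ x, η x = exp (W x) / ∫ z, exp (W z)) : Continuous η := by
  rw [show η = _ from funext hη]
  exact (continuous_exp.comp hW).div_const _

theorem gibbs_nonneg {W η : Torus n → ℝ} (hη : ∀ x, η x = exp (W x) / ∫ z, exp (W z)) :
    0 ≤ η := fun x => by
  rw [hη x]
  exact div_nonneg (exp_pos _).le (integral_nonneg fun _ => (exp_pos _).le)

theorem integral_sub_hent_gibbs {W η : Torus n → ℝ} (hW : Continuous W)
    (hη : ∀ x, η x = exp (W x) / ∫ z, exp (W z)) :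
    ∫ x, W x ∂(volume.withDensity fun x => ENNReal.ofReal (η x))
        - Hent (volume.withDensity fun x => ENNReal.ofReal (η x))
      = log (∫ x, exp (W x)) := by
  have hηc := continuous_gibbs hW hη
  rw [integral_sub_hent_withDensity_ofReal hηc (gibbs_nonneg hη)]
  exact integral_mul_sub_integral_mul_log_gibbs hη
    ((continuous_exp.comp hW).integrable_of_hasCompactSupport (.of_compactSpace _))
    ((hW.mul hηc).integrable_of_hasCompactSupport (.of_compactSpace _))

end Torus

section Payoff

variable {n : ℕ} {f : Torus n → Torus n → ℝ}

noncomputable def payoff (f : Torus n → Torus n → ℝ) (μ ν : Measure (Torus n)) : ℝ :=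
  (∫ x, ∫ y, f x y ∂ν ∂μ) + Hent μ - Hent ν

theorem Fval_eq_payoff {μ ν : Measure (Torus n)} (hμ : entAdmissible μ) (hν : entAdmissible ν) :
    Fval f μ ν = payoff f μ ν := by
  rw [Fval, if_pos hμ, if_pos hν, payoff]

theorem Fval_le_Fval {μ ν μ' ν' : Measure (Torus n)} (hμ : entAdmissible μ)
    (hν' : entAdmissible ν')
    (h : entAdmissible ν → entAdmissible μ' → payoff f μ ν ≤ payoff f μ' ν') :
    Fval f μ ν ≤ Fval f μ' ν' := by
  by_cases hν : entAdmissible ν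
  · by_cases hμ' : entAdmissible μ'
    · rw [Fval_eq_payoff hμ hν, Fval_eq_payoff hμ' hν']
      exact EReal.coe_le_coe_iff.mpr (h hν hμ')
    · simp [Fval, hμ']
  · rw [Fval, if_pos hμ, if_neg hν]
    exact bot_le

theorem NIval_eq_zero_of_isSaddlePointOn {μ ν : Measure (Torus n)} (hμ : IsProbabilityMeasure μ)
    (hν : IsProbabilityMeasure ν) (hμ_adm : entAdmissible μ) (hν_adm : entAdmissible ν)
    (h : IsSaddlePointOn {m | IsProbabilityMeasure m} {m | IsProbabilityMeasure m} (Fval f) μ ν) :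
    NIval f μ ν = 0 := by
  obtain ⟨hsup, hinf⟩ := (isSaddlePointOn_iff (X := {m | IsProbabilityMeasure m})
    (Y := {m | IsProbabilityMeasure m}) hμ hν).mp h
  rw [NIval, hsup, hinf, Fval_eq_payoff hμ_adm hν_adm, ← EReal.coe_sub, sub_self, EReal.coe_zero]

theorem continuous_integral_fst (hf : Continuous fun p : Torus n × Torus n => f p.1 p.2)
    (μ : Measure (Torus n)) [IsFiniteMeasure μ] :
    Continuous fun y => ∫ x, f x y ∂μ := by
  simpa using continuous_parametric_integral_of_continuous (μ := μ)
    (f := fun y x => f x y) (hf.comp continuous_swap) isCompact_univ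

theorem continuous_integral_snd (hf : Continuous fun p : Torus n × Torus n => f p.1 p.2)
    (ν : Measure (Torus n)) [IsFiniteMeasure ν] :
    Continuous fun x => ∫ y, f x y ∂ν := by
  simpa using continuous_parametric_integral_of_continuous (μ := ν) hf isCompact_univ

theorem payoff_le_payoff_gibbs_right (hf : Continuous fun p : Torus n × Torus n => f p.1 p.2)
    {μ : Measure (Torus n)} [IsFiniteMeasure μ]
    {η : Torus n → ℝ} (hη : ∀ y, η y = exp (∫ x, f x y ∂μ) / ∫ z, exp (∫ x, f x z ∂μ))
    {ν : Measure (Torus n)} [IsProbabilityMeasure ν] (hν : entAdmissible ν) :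
    payoff f μ ν ≤ payoff f μ (volume.withDensity fun y => ENNReal.ofReal (η y)) := by
  have hU := continuous_integral_fst hf μ
  have : IsFiniteMeasure (volume.withDensity fun y => ENNReal.ofReal (η y)) :=
    isFiniteMeasure_withDensity_ofReal ((continuous_gibbs hU hη).integrable_of_hasCompactSupport
      (.of_compactSpace _)).hasFiniteIntegral
  have hmax := integral_sub_hent_le_log_integral_exp hU hν
  have hη_eq := integral_sub_hent_gibbs hU hη
  have hint : ∀ (ν : Measure (Torus n)) [IsFiniteMeasure ν],
      Integrable (Function.uncurry f) (μ.prod ν) := fun _ _ =>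
    hf.integrable_of_hasCompactSupport (.of_compactSpace _)
  rw [payoff, payoff, integral_integral_swap (hint ν), integral_integral_swap (hint _)]
  linarith

theorem payoff_gibbs_left_le_payoff (hf : Continuous fun p : Torus n × Torus n => f p.1 p.2)
    {ν : Measure (Torus n)} [IsFiniteMeasure ν]
    {ρ : Torus n → ℝ} (hρ : ∀ x, ρ x = exp (-∫ y, f x y ∂ν) / ∫ z, exp (-∫ y, f z y ∂ν))
    {μ : Measure (Torus n)} [IsProbabilityMeasure μ] (hμ : entAdmissible μ) :
    payoff f (volume.withDensity fun x => ENNReal.ofReal (ρ x)) ν ≤ payoff f μ ν := by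
  have hV := (continuous_integral_snd hf ν).neg
  have hmin := integral_sub_hent_le_log_integral_exp hV hμ
  have hρ_eq := integral_sub_hent_gibbs hV hρ
  simp only [Pi.neg_apply, integral_neg] at hmin hρ_eq
  rw [payoff, payoff]
  linarith

end Payoff

theorem stmt15_general (n : ℕ) (f : Torus n → Torus n → ℝ)
    (hf : Continuous fun p : Torus n × Torus n => f p.1 p.2)
    (ρstar ηstar : Torus n → ℝ)
    (hμstar : IsProbabilityMeasure (volume.withDensity fun x => ENNReal.ofReal (ρstar x)))
    (hνstar : IsProbabilityMeasure (volume.withDensity fun y => ENNReal.ofReal (ηstar y)))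
    (hρfix : ∀ x, ρstar x
        = Real.exp (-(∫ y, f x y ∂(volume.withDensity fun y' => ENNReal.ofReal (ηstar y'))))
          / ∫ z, Real.exp (-(∫ y, f z y ∂(volume.withDensity fun y' => ENNReal.ofReal (ηstar y')))))
    (hηfix : ∀ y, ηstar y
        = Real.exp (∫ x, f x y ∂(volume.withDensity fun x' => ENNReal.ofReal (ρstar x')))
          / ∫ z, Real.exp (∫ x, f x z ∂(volume.withDensity fun x' => ENNReal.ofReal (ρstar x')))) :
    (∀ μ ν : Measure (Torus n), IsProbabilityMeasure μ → IsProbabilityMeasure ν →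
        Fval f (volume.withDensity fun x => ENNReal.ofReal (ρstar x)) ν
          ≤ Fval f (volume.withDensity fun x => ENNReal.ofReal (ρstar x))
              (volume.withDensity fun y => ENNReal.ofReal (ηstar y)) ∧
        Fval f (volume.withDensity fun x => ENNReal.ofReal (ρstar x))
            (volume.withDensity fun y => ENNReal.ofReal (ηstar y))
          ≤ Fval f μ (volume.withDensity fun y => ENNReal.ofReal (ηstar y)))
    ∧ NIval f (volume.withDensity fun x => ENNReal.ofReal (ρstar x))
        (volume.withDensity fun y => ENNReal.ofReal (ηstar y)) = (0 : EReal) := by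
  set μs : Measure (Torus n) := volume.withDensity fun x => ENNReal.ofReal (ρstar x)
  set νs : Measure (Torus n) := volume.withDensity fun y => ENNReal.ofReal (ηstar y)
  have hμs_adm := entAdmissible_withDensity_ofReal
    (continuous_gibbs (continuous_integral_snd hf νs).neg hρfix) (gibbs_nonneg hρfix)
  have hνs_adm := entAdmissible_withDensity_ofReal
    (continuous_gibbs (continuous_integral_fst hf μs) hηfix) (gibbs_nonneg hηfix)
  have hsaddle : IsSaddlePointOn {m | IsProbabilityMeasure m} {m | IsProbabilityMeasure m}
      (Fval f) μs νs := by
    intro μ (hμ : IsProbabilityMeasure μ) ν (hν : IsProbabilityMeasure ν)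
    exact Fval_le_Fval hμs_adm hνs_adm fun hν_adm hμ_adm =>
      (payoff_le_payoff_gibbs_right hf hηfix hν_adm).trans
        (payoff_gibbs_left_le_payoff hf hρfix hμ_adm)
  exact ⟨fun μ ν hμ hν => ⟨hsaddle μs hμstar ν hν, hsaddle μ hμ νs hνstar⟩,
    NIval_eq_zero_of_isSaddlePointOn hμstar hνstar hμs_adm hνs_adm hsaddle⟩

/-- **The Gibbs fixed point is a mixed Nash equilibrium.** If `μ* = ρ* dx` and `ν* = η* dx`
satisfy the Gibbs fixed-point relations `ρ* = e^{−V_{ν*}}/∫e^{−V_{ν*}}` and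
`η* = e^{U_{μ*}}/∫e^{U_{μ*}}`, then `F(μ*,ν) ≤ F(μ*,ν*) ≤ F(μ,ν*)` for all probability
measures `μ, ν`; in particular `NI(μ*,ν*) = 0`. -/
theorem stmt15 (n : ℕ) (f : Torus n → Torus n → ℝ)
    (hf : Continuous fun p : Torus n × Torus n => f p.1 p.2)
    (ρstar ηstar : Torus n → ℝ) (hρm : Measurable ρstar) (hηm : Measurable ηstar)
    (hμstar : IsProbabilityMeasure (volume.withDensity fun x => ENNReal.ofReal (ρstar x)))
    (hνstar : IsProbabilityMeasure (volume.withDensity fun y => ENNReal.ofReal (ηstar y)))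
    (hρfix : ∀ x, ρstar x
        = Real.exp (-(∫ y, f x y ∂(volume.withDensity fun y' => ENNReal.ofReal (ηstar y'))))
          / ∫ z, Real.exp (-(∫ y, f z y ∂(volume.withDensity fun y' => ENNReal.ofReal (ηstar y')))))
    (hηfix : ∀ y, ηstar y
        = Real.exp (∫ x, f x y ∂(volume.withDensity fun x' => ENNReal.ofReal (ρstar x')))
          / ∫ z, Real.exp (∫ x, f x z ∂(volume.withDensity fun x' => ENNReal.ofReal (ρstar x')))) :
    (∀ μ ν : Measure (Torus n), IsProbabilityMeasure μ → IsProbabilityMeasure ν →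
        Fval f (volume.withDensity fun x => ENNReal.ofReal (ρstar x)) ν
          ≤ Fval f (volume.withDensity fun x => ENNReal.ofReal (ρstar x))
              (volume.withDensity fun y => ENNReal.ofReal (ηstar y)) ∧
        Fval f (volume.withDensity fun x => ENNReal.ofReal (ρstar x))
            (volume.withDensity fun y => ENNReal.ofReal (ηstar y))
          ≤ Fval f μ (volume.withDensity fun y => ENNReal.ofReal (ηstar y)))
    ∧ NIval f (volume.withDensity fun x => ENNReal.ofReal (ρstar x))
        (volume.withDensity fun y => ENNReal.ofReal (ηstar y)) = (0 : EReal) :=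
  stmt15_general n f hf ρstar ηstar hμstar hνstar hρfix hηfix
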